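/- Let n ≥ 1, t0 ∈ ℝ, y0 ∈ ℝ^n, and let a, b, L > 0 with a ≤ b/L. If f : [t0, t0+a] × {y ∈ ℝ^n : ‖y − y0‖ ≤ b} → ℝ^n is continuous and satisfies ‖f(t,y)‖ ≤ L on its domain (‖·‖ the maximum norm), then there exists a differentiable function φ : [t0, t0+a] → ℝ^n with φ(t0) = y0, ‖φ(t) − y0‖ ≤ b for all t, and φ'(t) = f(t, φ(t)) for all t ∈ [t0, t0+a]. -/

import Mathlib

/-!
Extend `f` from the rectangle to a bounded uniformly continuous field `F` on `ℝ × ℝⁿ` by composing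
with the `1`-Lipschitz retraction onto the rectangle. The coordinatewise inf-convolutions
`p ↦ ⨅ q, F q + k * dist p q` are `k`-Lipschitz, still bounded by `L`, and converge uniformly to
`F`, so Picard–Lindelöf solves the approximate problems. The approximate solutions are
`L`-Lipschitz, hence by Arzelà–Ascoli a subsequence converges uniformly, and dominated convergence
passes to the limit in the integral equation `φ t = y₀ + ∫ s in t₀..t, F s (φ s)`. Finally
`‖φ t - y₀‖ ≤ L (t - t₀) ≤ L a ≤ b` keeps the solution in the ball, where `F = f`.
-/

open Set Metric Filter Topology Function MeasureTheory
open scoped NNReal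

section InfConvDist

variable {α : Type*} [PseudoMetricSpace α] {g : α → ℝ} {C : ℝ}

noncomputable def infConvDist (k : ℝ≥0) (g : α → ℝ) (p : α) : ℝ :=
  ⨅ q, g q + k * dist p q

lemma neg_le_add_mul_dist (hg : ∀ q, |g q| ≤ C) (k : ℝ≥0) (p q : α) :
    -C ≤ g q + k * dist p q := by
  have := neg_le_of_abs_le (hg q)
  have : 0 ≤ (k : ℝ) * dist p q := by positivity
  linarith

lemma bddBelow_range_add_mul_dist (hg : ∀ q, |g q| ≤ C) (k : ℝ≥0) (p : α) :
    BddBelow (range fun q => g q + k * dist p q) :=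
  ⟨-C, forall_mem_range.2 (neg_le_add_mul_dist hg k p)⟩

lemma infConvDist_le_add_mul_dist (hg : ∀ q, |g q| ≤ C) (k : ℝ≥0) (p q : α) :
    infConvDist k g p ≤ g q + k * dist p q :=
  ciInf_le (bddBelow_range_add_mul_dist hg k p) q

lemma infConvDist_le (hg : ∀ q, |g q| ≤ C) (k : ℝ≥0) (p : α) : infConvDist k g p ≤ g p := by
  simpa using infConvDist_le_add_mul_dist hg k p p

lemma abs_infConvDist_le (hg : ∀ q, |g q| ≤ C) (k : ℝ≥0) (p : α) : |infConvDist k g p| ≤ C := by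
  have : Nonempty α := ⟨p⟩
  exact abs_le.2 ⟨le_ciInf (neg_le_add_mul_dist hg k p),
    (infConvDist_le hg k p).trans (le_of_abs_le (hg p))⟩

lemma lipschitzWith_infConvDist (hg : ∀ q, |g q| ≤ C) (k : ℝ≥0) :
    LipschitzWith k (infConvDist k g) := by
  refine LipschitzWith.of_le_add_mul k fun p p' => ?_
  have : Nonempty α := ⟨p⟩
  rw [← sub_le_iff_le_add]
  refine le_ciInf fun q => sub_le_iff_le_add.2 ?_
  calc infConvDist k g p ≤ g q + k * dist p q := infConvDist_le_add_mul_dist hg k p q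
    _ ≤ g q + k * (dist p' q + dist p p') := by
        gcongr; exact (dist_triangle p p' q).trans_eq (add_comm _ _)
    _ = g q + k * dist p' q + k * dist p p' := by ring

/-- Far from `p` the penalty `k * dist p q` exceeds the oscillation `2 * C` of `g`; near `p`,
`g q` is `ε`-close to `g p`. -/
lemma sub_le_infConvDist (hg : ∀ q, |g q| ≤ C) {k : ℝ≥0} {p : α} {δ ε : ℝ} (hε : 0 ≤ ε)
    (hδ : ∀ q, dist p q ≤ δ → g p - g q ≤ ε) (hkδ : 2 * C ≤ k * δ) :
    g p - ε ≤ infConvDist k g p := by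
  have : Nonempty α := ⟨p⟩
  refine le_ciInf fun q => ?_
  rcases le_or_gt (dist p q) δ with hpq | hpq
  · have := hδ q hpq
    have : 0 ≤ (k : ℝ) * dist p q := by positivity
    linarith
  · have := neg_le_of_abs_le (hg q)
    have := le_of_abs_le (hg p)
    have : (k : ℝ) * δ ≤ k * dist p q := by gcongr
    linarith

theorem tendstoUniformly_infConvDist (hg : ∀ q, |g q| ≤ C) (hgu : UniformContinuous g) :
    TendstoUniformly (fun k : ℕ => infConvDist k g) g atTop := by
  rw [Metric.tendstoUniformly_iff]
  intro ε hε
  obtain ⟨δ, hδ, hgδ⟩ := Metric.uniformContinuous_iff.1 hgu (ε / 2) (half_pos hε)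
  filter_upwards [eventually_ge_atTop ⌈4 * C / δ⌉₊] with k hk p
  have hkδ : 2 * C ≤ (k : ℝ≥0) * (δ / 2) := by
    have := (Nat.le_ceil _).trans (Nat.cast_le.2 hk : (⌈4 * C / δ⌉₊ : ℝ) ≤ k)
    rw [div_le_iff₀ hδ] at this
    push_cast; linarith
  have hclose : ∀ q, dist p q ≤ δ / 2 → g p - g q ≤ ε / 2 := fun q hq =>
    (le_abs_self _).trans (hgδ (hq.trans_lt (half_lt_self hδ))).le
  have := sub_le_infConvDist hg (half_pos hε).le hclose hkδ
  rw [Real.dist_eq, abs_sub_lt_iff]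
  constructor <;> linarith [infConvDist_le hg k p]

theorem UniformContinuous.exists_lipschitzWith_tendstoUniformly {ι : Type*} [Fintype ι]
    {G : α → ι → ℝ} (hG : UniformContinuous G) (hGC : ∀ p, ‖G p‖ ≤ C) :
    ∃ H : ℕ → α → ι → ℝ, (∀ k : ℕ, LipschitzWith k (H k)) ∧ (∀ k p, ‖H k p‖ ≤ C) ∧
      TendstoUniformly H G atTop := by
  have hGi : ∀ i p, |G p i| ≤ C := fun i p => (norm_le_pi_norm (G p) i).trans (hGC p)
  refine ⟨fun k p i => infConvDist k (G · i) p, fun k => ?_, fun k p => ?_, ?_⟩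
  · refine LipschitzWith.of_dist_le_mul fun p q => (dist_pi_le_iff (by positivity)).2 fun i => ?_
    exact (lipschitzWith_infConvDist (hGi i) k).dist_le_mul p q
  · exact (pi_norm_le_iff_of_nonneg ((norm_nonneg _).trans (hGC p))).2 fun i =>
      abs_infConvDist_le (hGi i) k p
  · rw [Metric.tendstoUniformly_iff]
    intro ε hε
    have hi := fun i => Metric.tendstoUniformly_iff.1
      (tendstoUniformly_infConvDist (hGi i) ((LipschitzWith.eval i).uniformContinuous.comp hG)) ε hε
    filter_upwards [eventually_all.2 hi] with k hk p
    exact (dist_pi_lt_iff hε).2 fun i => hk i p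

end InfConvDist

theorem LipschitzWith.exists_tendstoUniformly_subseq {X Y : Type*} [MetricSpace X] [CompactSpace X]
    [MetricSpace Y] [ProperSpace Y] {K : ℝ≥0} {ψ : ℕ → X → Y} (hψ : ∀ k, LipschitzWith K (ψ k))
    {x₀ : X} {y₀ : Y} (hψ₀ : ∀ k, ψ k x₀ = y₀) :
    ∃ φ : X → Y, ∃ u : ℕ → ℕ, StrictMono u ∧ LipschitzWith K φ ∧
      TendstoUniformly (fun j => ψ (u j)) φ atTop := by
  set T : Set (X → Y) := {φ | φ x₀ = y₀ ∧ LipschitzWith K φ}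
  have hT : IsCompact T := by
    refine (isCompact_univ_pi fun x => isCompact_closedBall y₀ (K * dist x x₀)).of_isClosed_subset
      ((isClosed_eq (continuous_apply x₀) continuous_const).inter
        (isClosed_setOfPred_lipschitzWith K)) ?_
    rintro φ ⟨hφ₀, hφ⟩ x -
    simpa only [mem_closedBall, hφ₀] using hφ.dist_le_mul x x₀
  set S : Set C(X, Y) := {φ | φ x₀ = y₀ ∧ LipschitzWith K φ}
  have hST : ContinuousMap.toFun '' S = T :=
    Subset.antisymm (image_subset_iff.2 fun _ => id) fun φ hφ => ⟨⟨φ, hφ.2.continuous⟩, hφ, rfl⟩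
  have hS : IsCompact S := ArzelaAscoli.isCompact_of_equicontinuous S (hST ▸ hT)
    (LipschitzWith.uniformEquicontinuous _ K fun φ => φ.2.2).equicontinuous
  obtain ⟨φ, hφ, u, hu, hlim⟩ := hS.isSeqCompact (x := fun k => ⟨ψ k, (hψ k).continuous⟩)
    fun k => ⟨hψ₀ k, hψ k⟩
  exact ⟨φ, u, hu, hφ.2, ContinuousMap.tendsto_iff_tendstoUniformly.1 hlim⟩

theorem LipschitzOnWith.exists_tendstoUniformlyOn_subseq {X Y : Type*} [MetricSpace X]
    [MetricSpace Y] [ProperSpace Y] {s : Set X} (hs : IsCompact s) {K : ℝ≥0} {ψ : ℕ → X → Y}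
    (hψ : ∀ k, LipschitzOnWith K (ψ k) s) {x₀ : X} (hx₀ : x₀ ∈ s) {y₀ : Y}
    (hψ₀ : ∀ k, ψ k x₀ = y₀) :
    ∃ φ : X → Y, ∃ u : ℕ → ℕ, StrictMono u ∧ LipschitzOnWith K φ s ∧
      TendstoUniformlyOn (fun j => ψ (u j)) φ atTop s := by
  have : CompactSpace s := isCompact_iff_compactSpace.1 hs
  obtain ⟨φ, u, hu, hφ, hlim⟩ := LipschitzWith.exists_tendstoUniformly_subseq
    (fun k => lipschitzOnWith_iff_restrict.1 (hψ k)) (x₀ := ⟨x₀, hx₀⟩) hψ₀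
  have hext : s.domRestrict (extend Subtype.val φ fun _ => y₀) = φ :=
    funext fun x => Subtype.val_injective.extend_apply _ _ x
  refine ⟨extend Subtype.val φ fun _ => y₀, u, hu, ?_, ?_⟩
  · rwa [lipschitzOnWith_iff_restrict, hext]
  · rwa [tendstoUniformlyOn_iff_tendstoUniformly_comp_coe, ← domRestrict_eq, hext]

section Picard

variable {E : Type*} [NormedAddCommGroup E]

lemma IsPicardLindelof.of_lipschitzWith {f : ℝ → E → E} {K L a : ℝ≥0}
    (hf : LipschitzWith K (uncurry f)) (hfL : ∀ t x, ‖f t x‖ ≤ L) {tmin tmax : ℝ}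
    {t₀ : Icc tmin tmax} {x₀ : E} (ha : L * max (tmax - t₀) (t₀ - tmin) ≤ a) :
    IsPicardLindelof f t₀ x₀ a 0 L K where
  lipschitzOnWith t _ := by
    have := hf.comp (LipschitzWith.prodMk_left t)
    rw [mul_one] at this
    exact this.lipschitzOnWith
  continuousOn x _ := (hf.continuous.comp (continuous_id.prodMk continuous_const)).continuousOn
  norm_le t _ x _ := hfL t x
  mul_max_le := by simpa using ha

variable [NormedSpace ℝ E]

theorem tendsto_picard_of_tendstoUniformly {F : ℕ → ℝ → E → E} {f : ℝ → E → E}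
    {α : ℕ → ℝ → E} {φ : ℝ → E} {L : ℝ} {t₀ t : ℝ} (hF : ∀ k, Continuous (uncurry (F k)))
    (hFL : ∀ k τ x, ‖F k τ x‖ ≤ L)
    (hFf : TendstoUniformly (fun k => uncurry (F k)) (uncurry f) atTop)
    (hf : Continuous (uncurry f)) (hα : ∀ k, ContinuousOn (α k) (uIcc t₀ t))
    (hαφ : ∀ τ ∈ uIcc t₀ t, Tendsto (fun k => α k τ) atTop (𝓝 (φ τ))) (x₀ : E) :
    Tendsto (fun k => ODE.picard (F k) t₀ x₀ (α k) t) atTop (𝓝 (ODE.picard f t₀ x₀ φ t)) := by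
  refine tendsto_const_nhds.add <|
    intervalIntegral.tendsto_integral_filter_of_dominated_convergence (fun _ => L)
      (Eventually.of_forall fun k => ?_) (Eventually.of_forall fun k => ?_)
      intervalIntegrable_const (ae_of_all _ fun τ hτ => ?_)
  · exact (ODE.continuousOn_comp (u := univ) (hF k).continuousOn (hα k) (mapsTo_univ _ _)).mono
      uIoc_subset_uIcc |>.aestronglyMeasurable measurableSet_uIoc
  · exact ae_of_all _ fun τ _ => hFL k τ (α k τ)
  · exact hFf.tendsto_comp hf.continuousAt
      (tendsto_const_nhds.prodMk_nhds (hαφ τ (uIoc_subset_uIcc hτ)))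

variable [CompleteSpace E]

theorem exists_lipschitzOnWith_forall_mem_Icc_eq_picard {f : ℝ → E → E} {K L : ℝ≥0}
    (hf : LipschitzWith K (uncurry f)) (hfL : ∀ t x, ‖f t x‖ ≤ L) {tmin tmax t₀ : ℝ}
    (ht₀ : t₀ ∈ Icc tmin tmax) (x₀ : E) :
    ∃ α : ℝ → E, LipschitzOnWith L α (Icc tmin tmax) ∧
      ∀ t ∈ Icc tmin tmax, α t = ODE.picard f t₀ x₀ α t := by
  obtain ⟨α, hα₀, hα⟩ := (IsPicardLindelof.of_lipschitzWith (t₀ := ⟨t₀, ht₀⟩) (x₀ := x₀) hf hfL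
    (Real.le_coe_toNNReal _)).exists_eq_forall_mem_Icc_hasDerivWithinAt₀
  refine ⟨α, (convex_Icc _ _).lipschitzOnWith_of_nnnorm_hasDerivWithin_le hα
    fun t _ => hfL t (α t), fun t ht => ?_⟩
  have hsub := uIcc_subset_Icc ht₀ ht
  rw [← hα₀, ODE.picard_eq_of_hasDerivAt (u := univ) hf.continuous.continuousOn
    (fun t' ht' => (hα t' (hsub ht')).mono hsub) (mapsTo_univ _ _)]

end Picard

section Peano

variable {ι : Type*} [Fintype ι] {f : ℝ → (ι → ℝ) → ι → ℝ} {L : ℝ≥0} {tmin tmax t₀ : ℝ}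

theorem exists_lipschitzOnWith_forall_mem_Icc_eq_picard_of_uniformContinuous
    (hf : UniformContinuous (uncurry f)) (hfL : ∀ t x, ‖f t x‖ ≤ L)
    (ht₀ : t₀ ∈ Icc tmin tmax) (x₀ : ι → ℝ) :
    ∃ α : ℝ → ι → ℝ, LipschitzOnWith L α (Icc tmin tmax) ∧
      ∀ t ∈ Icc tmin tmax, α t = ODE.picard f t₀ x₀ α t := by
  obtain ⟨H, hH, hHL, hHf⟩ := hf.exists_lipschitzWith_tendstoUniformly fun p => hfL p.1 p.2
  choose α hαL hα using fun k => exists_lipschitzOnWith_forall_mem_Icc_eq_picard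
    (f := curry (H k)) (hH k) (fun t x => hHL k (t, x)) ht₀ x₀
  obtain ⟨φ, u, hu, hφL, hαφ⟩ := LipschitzOnWith.exists_tendstoUniformlyOn_subseq isCompact_Icc
    hαL ht₀ fun k => (hα k t₀ ht₀).trans ODE.picard_apply₀
  refine ⟨φ, hφL, fun t ht => tendsto_nhds_unique (hαφ.tendsto_at ht) ?_⟩
  have hsub := uIcc_subset_Icc ht₀ ht
  have hHuf : TendstoUniformly (fun j => H (u j)) (uncurry f) atTop := fun s hs =>
    hu.tendsto_atTop.eventually (hHf s hs)
  have := tendsto_picard_of_tendstoUniformly (F := fun j => curry (H (u j))) (α := α ∘ u)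
    (fun j => (hH (u j)).continuous) (fun j τ x => hHL (u j) (τ, x))
    hHuf hf.continuous
    (fun j => (hαL (u j)).continuousOn.mono hsub)
    (fun τ hτ => hαφ.tendsto_at (hsub hτ)) x₀
  exact this.congr fun j => (hα (u j) t ht).symm

theorem exists_eq_forall_mem_Icc_hasDerivWithinAt_of_uniformContinuous
    (hf : UniformContinuous (uncurry f)) (hfL : ∀ t x, ‖f t x‖ ≤ L)
    (ht₀ : t₀ ∈ Icc tmin tmax) (x₀ : ι → ℝ) :
    ∃ α : ℝ → ι → ℝ, α t₀ = x₀ ∧ LipschitzOnWith L α (Icc tmin tmax) ∧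
      ∀ t ∈ Icc tmin tmax, HasDerivWithinAt α (f t (α t)) (Icc tmin tmax) t := by
  obtain ⟨α, hαL, hα⟩ :=
    exists_lipschitzOnWith_forall_mem_Icc_eq_picard_of_uniformContinuous hf hfL ht₀ x₀
  refine ⟨α, (hα t₀ ht₀).trans ODE.picard_apply₀, hαL, fun t ht => ?_⟩
  exact (ODE.hasDerivWithinAt_picard_Icc (u := univ) ht₀ hf.continuous.continuousOn
    hαL.continuousOn (fun _ _ => mem_univ _) x₀ ht).congr_of_mem hα ht

end Peano

section ClosedBallRetraction

variable {ι : Type*} [Fintype ι] {y₀ : ι → ℝ} {b : ℝ}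

/-- In the sup norm `closedBall y₀ b` is the box `∏ i, [y₀ i - b, y₀ i + b]`, onto which we
project coordinatewise. -/
noncomputable def projClosedBall (y₀ : ι → ℝ) (hb : 0 ≤ b) (y : ι → ℝ) : ι → ℝ :=
  fun i => projIcc (y₀ i - b) (y₀ i + b) (by linarith) (y i)

lemma mem_closedBall_iff_forall_mem_Icc (hb : 0 ≤ b) {y : ι → ℝ} :
    y ∈ closedBall y₀ b ↔ ∀ i, y i ∈ Icc (y₀ i - b) (y₀ i + b) := by
  simp only [closedBall_pi _ hb, mem_univ_pi, Real.closedBall_eq_Icc]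

lemma projClosedBall_mem (hb : 0 ≤ b) (y : ι → ℝ) : projClosedBall y₀ hb y ∈ closedBall y₀ b :=
  (mem_closedBall_iff_forall_mem_Icc hb).2 fun _ => Subtype.mem _

lemma projClosedBall_of_mem (hb : 0 ≤ b) {y : ι → ℝ} (hy : y ∈ closedBall y₀ b) :
    projClosedBall y₀ hb y = y :=
  funext fun i => congrArg Subtype.val <|
    projIcc_of_mem _ ((mem_closedBall_iff_forall_mem_Icc hb).1 hy i)

lemma lipschitzWith_projClosedBall (hb : 0 ≤ b) : LipschitzWith 1 (projClosedBall y₀ hb) := by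
  refine LipschitzWith.of_dist_le_mul fun y y' => ?_
  rw [NNReal.coe_one, one_mul, dist_pi_le_iff dist_nonneg]
  intro i
  have hi := ((LipschitzWith.subtype_val _).comp
    (LipschitzWith.projIcc (by linarith : y₀ i - b ≤ y₀ i + b))).dist_le_mul (y i) (y' i)
  rw [mul_one, NNReal.coe_one, one_mul] at hi
  exact hi.trans (dist_le_pi_dist y y' i)

end ClosedBallRetraction

theorem ContinuousOn.exists_uniformContinuous_eqOn_Icc_prod_closedBall {ι : Type*} [Fintype ι]
    {f : ℝ → (ι → ℝ) → ι → ℝ} {t₀ t₁ b L : ℝ} {y₀ : ι → ℝ} (h : t₀ ≤ t₁) (hb : 0 ≤ b)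
    (hf : ContinuousOn (uncurry f) (Icc t₀ t₁ ×ˢ closedBall y₀ b))
    (hfL : ∀ t ∈ Icc t₀ t₁, ∀ y ∈ closedBall y₀ b, ‖f t y‖ ≤ L) :
    ∃ F : ℝ → (ι → ℝ) → ι → ℝ, UniformContinuous (uncurry F) ∧ (∀ t y, ‖F t y‖ ≤ L) ∧
      ∀ t ∈ Icc t₀ t₁, ∀ y ∈ closedBall y₀ b, F t y = f t y := by
  set P : ℝ × (ι → ℝ) → ℝ × (ι → ℝ) := Prod.map (fun t => projIcc t₀ t₁ h t) (projClosedBall y₀ hb)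
  have hP : UniformContinuous P :=
    (((LipschitzWith.subtype_val _).comp (LipschitzWith.projIcc h)).uniformContinuous).prodMap
      (lipschitzWith_projClosedBall hb).uniformContinuous
  have hPK : MapsTo P univ (Icc t₀ t₁ ×ˢ closedBall y₀ b) := fun p _ =>
    ⟨Subtype.mem _, projClosedBall_mem hb p.2⟩
  refine ⟨curry (uncurry f ∘ P), ?_, fun t y => hfL _ (Subtype.mem _) _ (projClosedBall_mem hb y),
    fun t ht y hy => by simp [P, projIcc_of_mem h ht, projClosedBall_of_mem hb hy]⟩
  have hfK := (isCompact_Icc.prod (isCompact_closedBall y₀ b)).uniformContinuousOn_of_continuous hf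
  exact uniformContinuousOn_univ.1 (hfK.comp hP.uniformContinuousOn hPK)

theorem peano_whole_interval (n : ℕ) (t0 : ℝ) (y0 : Fin n → ℝ)
    (a b L : ℝ) (ha : 0 < a) (hb : 0 < b) (hL : 0 < L) (haL : a ≤ b / L)
    (f : ℝ → (Fin n → ℝ) → (Fin n → ℝ))
    (hf : ContinuousOn (fun p : ℝ × (Fin n → ℝ) => f p.1 p.2)
      (Icc t0 (t0 + a) ×ˢ Metric.closedBall y0 b))
    (hfL : ∀ t ∈ Icc t0 (t0 + a), ∀ y ∈ Metric.closedBall y0 b, ‖f t y‖ ≤ L) :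
    ∃ φ : ℝ → Fin n → ℝ,
      φ t0 = y0 ∧
      (∀ t ∈ Icc t0 (t0 + a), ‖φ t - y0‖ ≤ b) ∧
      (∀ t ∈ Icc t0 (t0 + a),
        HasDerivWithinAt φ (f t (φ t)) (Icc t0 (t0 + a)) t) := by
  have ht0 : t0 ∈ Icc t0 (t0 + a) := left_mem_Icc.2 (by linarith)
  obtain ⟨F, hFu, hFL, hFf⟩ :=
    hf.exists_uniformContinuous_eqOn_Icc_prod_closedBall ht0.2 hb.le hfL
  lift L to ℝ≥0 using hL.le
  obtain ⟨φ, hφ₀, hφL, hφ⟩ :=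
    exists_eq_forall_mem_Icc_hasDerivWithinAt_of_uniformContinuous hFu hFL ht0 y0
  have hφb : ∀ t ∈ Icc t0 (t0 + a), ‖φ t - y0‖ ≤ b := fun t ht =>
    calc ‖φ t - y0‖ = dist (φ t) (φ t0) := by rw [hφ₀, dist_eq_norm]
      _ ≤ L * dist t t0 := hφL.dist_le_mul t ht t0 ht0
      _ ≤ L * a := by
        gcongr
        rw [Real.dist_eq, abs_le]
        constructor <;> linarith [ht.1, ht.2]
      _ ≤ b := (le_div_iff₀' hL).1 haL
  refine ⟨φ, hφ₀, hφb, fun t ht => ?_⟩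
  rw [← hFf t ht (φ t) (mem_closedBall_iff_norm.2 (hφb t ht))]
  exact hφ t ht
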